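/- arXiv:math/0411439 — 2 statements merged into one kernel-verified Lean document; each statement's English description precedes it below -/
import Mathlib

section
/- Let 𝔤 be a finite-dimensional complex semisimple Lie algebra with Cartan subalgebra 𝔥, and W a finite-dimensional 𝔤-module. Let λ : 𝔥 → ℂ be a weight of W, with weight space W_λ = {w ∈ W : h·w = λ(h)w for all h ∈ 𝔥}. If there exists a root α of (𝔤,𝔥) whose coroot H_α satisfies that λ(H_α) is a nonzero even integer, then W_λ ⊗ 𝔥 is contained in the Lie submodule of W ⊗ 𝔤 generated by the 𝔤-overshears. -/
/-!
Split `h = (λ(h)/λ(H_α)) • H_α + h₀` with `λ(h₀) = 0`; then `w ⊗ h₀` is an overshear, so only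
`w ⊗ H_α` matters, and everything happens inside the `sl₂`-triple `(H_α, e, f)`, for which `w` has
eigenvalue `2k`. By finite dimensionality (after swapping `e` and `f` if `k < 0`) `w` is a sum of
vectors `f^p v` with `v` primitive of weight `2m = 2(k + p)`. For such `v`, the overshears `v ⊗ e`
and `f v ⊗ e` give `v ⊗ H_α`, and `f^m v ⊗ H_α` is an overshear because `f^m v` has weight `0`.
Comparing the `f`-orbits of these two elements yields `f^p v ⊗ H_α` for `p ≥ m`; the lowest
vector `f^(2m) v` is primitive for the opposite triple `(-H_α, f, e)`, which gives the remaining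
`p < m`.
-/

open TensorProduct LieModule

section Overshear

variable (R L M : Type*) [CommRing R] [LieRing L] [LieAlgebra R L]
  [AddCommGroup M] [Module R M] [LieRingModule L M] [LieModule R L M]

def overshearSpan : LieSubmodule R L (M ⊗[R] L) :=
  LieSubmodule.lieSpan R L {z | ∃ (u : M) (x : L), z = u ⊗ₜ[R] x ∧ ⁅x, ⁅x, u⁆⁆ = (0 : M)}

variable {R L M}

lemma LieSubmodule.toEnd_pow_apply_mem (N : LieSubmodule R L M) (x : L) (n : ℕ) {m : M}
    (hm : m ∈ N) : (toEnd R L M x ^ n) m ∈ N :=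
  Module.End.pow_apply_mem_of_forall_mem (p := N.toSubmodule) n (fun _ ↦ N.lie_mem) m hm

lemma tmul_mem_overshearSpan {u : M} {x : L} (h : ⁅x, ⁅x, u⁆⁆ = 0) :
    u ⊗ₜ[R] x ∈ overshearSpan R L M :=
  LieSubmodule.subset_lieSpan ⟨u, x, rfl, h⟩

lemma tmul_mem_overshearSpan_of_lie_eq_zero {u : M} {x : L} (h : ⁅x, u⁆ = 0) :
    u ⊗ₜ[R] x ∈ overshearSpan R L M :=
  tmul_mem_overshearSpan (by rw [h, lie_zero])

end Overshear

namespace IsSl2Triple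

section CommRing

variable {R L M : Type*} [CommRing R] [LieRing L] [LieAlgebra R L]
  [AddCommGroup M] [Module R M] [LieRingModule L M] [LieModule R L M]
  {h e f : L} (t : IsSl2Triple h e f)

include t in
lemma lie_f_tmul_e (u : M) : ⁅f, u ⊗ₜ[R] e⁆ = ⁅f, u⁆ ⊗ₜ e - u ⊗ₜ h := by
  rw [lie_tmul_right, ← t.lie_e_f, ← lie_skew, tmul_neg, sub_eq_add_neg]

include t in
lemma toEnd_f_pow_succ_tmul_h (u : M) (n : ℕ) :
    (toEnd R L (M ⊗[R] L) f ^ (n + 1)) (u ⊗ₜ h) =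
      (toEnd R L M f ^ (n + 1)) u ⊗ₜ h + (2 * (n + 1) : R) • ((toEnd R L M f ^ n) u ⊗ₜ f) := by
  have hfh : ⁅f, h⁆ = (2 : R) • f := by rw [← lie_skew, t.lie_lie_smul_f R, neg_neg]
  induction n with
  | zero => simp [lie_tmul_right, hfh, tmul_smul]
  | succ n ih =>
    have hf (k : ℕ) : ⁅f, (toEnd R L M f ^ k) u⁆ = (toEnd R L M f ^ (k + 1)) u := by
      simp [pow_succ']
    rw [pow_succ', Module.End.mul_apply, ih, map_add, map_smul]
    simp only [toEnd_apply_apply, lie_tmul_right, lie_self, tmul_zero, add_zero, hfh, tmul_smul,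
      hf]
    push_cast
    module

lemma HasPrimitiveVectorWith.tmul_h_mem_overshearSpan {v : M} {μ : R}
    (P : t.HasPrimitiveVectorWith v μ) : v ⊗ₜ[R] h ∈ overshearSpan R L M := by
  have hve : v ⊗ₜ[R] e ∈ overshearSpan R L M := tmul_mem_overshearSpan_of_lie_eq_zero P.lie_e
  have hfve : ⁅f, v⁆ ⊗ₜ[R] e ∈ overshearSpan R L M := by
    refine tmul_mem_overshearSpan ?_
    have hefv := P.lie_e_pow_succ_toEnd_f 0
    simp only [zero_add, pow_one, toEnd_apply_apply, pow_zero, Module.End.one_apply] at hefv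
    rw [hefv, lie_smul, P.lie_e, smul_zero]
  have := sub_mem hfve ((overshearSpan R L M).lie_mem (x := f) hve)
  rwa [t.lie_f_tmul_e, sub_sub_cancel] at this

end CommRing

namespace HasPrimitiveVectorWith

section Domain

variable {R L M : Type*} [CommRing R] [IsDomain R] [CharZero R] [LieRing L] [LieAlgebra R L]
  [AddCommGroup M] [Module R M] [LieRingModule L M] [LieModule R L M]
  {h e f : L} {t : IsSl2Triple h e f} {v : M} {μ : R} (P : t.HasPrimitiveVectorWith v μ)
include P

lemma pow_toEnd_e_pow_toEnd_f {n : ℕ} (hμ : μ = n) {p q : ℕ} (hpq : p + q ≤ n) :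
    ∃ γ : R, γ ≠ 0 ∧
      (toEnd R L M e ^ q) ((toEnd R L M f ^ (p + q)) v) = γ • (toEnd R L M f ^ p) v := by
  induction q with
  | zero => exact ⟨1, one_ne_zero, by simp⟩
  | succ q ih =>
    obtain ⟨γ, hγ, hγv⟩ := ih (by omega)
    have hne : (((p + q : ℕ) : R) + 1) * (μ - (p + q : ℕ)) ≠ 0 := by
      refine mul_ne_zero (Nat.cast_add_one_ne_zero _) (sub_ne_zero.mpr ?_)
      rw [hμ]
      exact_mod_cast (by omega : n ≠ p + q)
    refine ⟨(((p + q : ℕ) : R) + 1) * (μ - (p + q : ℕ)) * γ, mul_ne_zero hne hγ, ?_⟩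
    rw [pow_succ, Module.End.mul_apply, ← add_assoc, toEnd_apply_apply,
      P.lie_e_pow_succ_toEnd_f, map_smul, hγv, smul_smul]

lemma symm_pow_toEnd_f [IsNoetherian R M] [Module.IsTorsionFree R M] {n : ℕ} (hμ : μ = n) :
    t.symm.HasPrimitiveVectorWith ((toEnd R L M f ^ n) v) μ where
  ne_zero := P.pow_toEnd_f_ne_zero_of_eq_nat hμ le_rfl
  lie_h := by
    rw [neg_lie, P.lie_h_pow_toEnd_f, ← neg_smul, hμ]
    congr 1
    ring
  lie_e := by rw [P.lie_f_pow_toEnd_f, P.pow_toEnd_f_eq_zero_of_eq_nat hμ]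

end Domain

section Field

variable {K L M : Type*} [Field K] [CharZero K] [LieRing L] [LieAlgebra K L]
  [AddCommGroup M] [Module K M] [LieRingModule L M] [LieModule K L M]
  {h e f : L} {t : IsSl2Triple h e f} {v : M} {μ : K} (P : t.HasPrimitiveVectorWith v μ)
include P

lemma pow_toEnd_f_tmul_h_mem_overshearSpan_of_le {m : ℕ} (hm : m ≠ 0) (hμ : μ = 2 * m) {p : ℕ}
    (hp : m ≤ p) : (toEnd K L M f ^ p) v ⊗ₜ[K] h ∈ overshearSpan K L M := by
  set S := overshearSpan K L M
  have hmid : (toEnd K L M f ^ m) v ⊗ₜ[K] h ∈ S :=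
    tmul_mem_overshearSpan_of_lie_eq_zero (by rw [P.lie_h_pow_toEnd_f, hμ, sub_self, zero_smul])
  obtain ⟨_ | j, rfl⟩ := Nat.exists_eq_add_of_le hp
  · exact hmid
  have hbot := S.toEnd_pow_apply_mem f (m + j + 1) P.tmul_h_mem_overshearSpan
  have htop := S.toEnd_pow_apply_mem f (j + 1) hmid
  rw [t.toEnd_f_pow_succ_tmul_h] at hbot htop
  simp only [← Module.End.mul_apply, ← pow_add] at htop
  rw [show j + 1 + m = m + (j + 1) by omega, show j + m = m + j by omega] at htop
  have hm' : (m : K) ≠ 0 := Nat.cast_ne_zero.mpr hm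
  -- eliminating the `⊗ f` components of the two `f`-orbits leaves `m • (f^p v ⊗ h)`
  refine (Submodule.smul_mem_iff S.toSubmodule hm').mp ?_
  convert sub_mem (S.smul_mem ((m + j + 1 : ℕ) : K) htop) (S.smul_mem ((j + 1 : ℕ) : K) hbot)
    using 1
  push_cast
  module

lemma pow_toEnd_f_tmul_h_mem_overshearSpan [FiniteDimensional K M] {m : ℕ} (hm : m ≠ 0)
    (hμ : μ = 2 * m) (p : ℕ) : (toEnd K L M f ^ p) v ⊗ₜ[K] h ∈ overshearSpan K L M := by
  rcases le_or_gt m p with hp | hp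
  · exact P.pow_toEnd_f_tmul_h_mem_overshearSpan_of_le hm hμ hp
  obtain ⟨q, hq⟩ : ∃ q, 2 * m = p + q := ⟨2 * m - p, by omega⟩
  have hn : μ = (p + q : ℕ) := by rw [hμ, ← hq]; push_cast; rfl
  obtain ⟨γ, hγ, hγv⟩ := P.pow_toEnd_e_pow_toEnd_f hn le_rfl
  have := (P.symm_pow_toEnd_f hn).pow_toEnd_f_tmul_h_mem_overshearSpan_of_le hm hμ
    (p := q) (by omega)
  rw [hγv, tmul_neg, neg_mem_iff, ← smul_tmul'] at this
  exact (Submodule.smul_mem_iff (overshearSpan K L M).toSubmodule hγ).mp this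

end Field

end HasPrimitiveVectorWith

section Decomposition

variable {K L M : Type*} [Field K] [CharZero K] [LieRing L] [LieAlgebra K L]
  [AddCommGroup M] [Module K M] [LieRingModule L M] [LieModule K L M]
  {h e f : L} (t : IsSl2Triple h e f)

variable (K) in
def primitiveSpan (n : ℕ) : Submodule K M :=
  Submodule.span K {u | ∃ (v : M) (p : ℕ),
    t.HasPrimitiveVectorWith v ((n + 2 * p : ℕ) : K) ∧ u = (toEnd K L M f ^ p) v}

omit [CharZero K] in
lemma primitiveSpan_le_eigenspace (n : ℕ) :
    t.primitiveSpan K n ≤ (toEnd K L M h).eigenspace (n : K) := by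
  refine Submodule.span_le.mpr ?_
  rintro _ ⟨v, p, P, rfl⟩
  rw [SetLike.mem_coe, Module.End.mem_eigenspace_iff, toEnd_apply_apply, P.lie_h_pow_toEnd_f]
  push_cast
  ring_nf

lemma primitiveSpan_add_two_le_map (n : ℕ) :
    t.primitiveSpan K (n + 2) ≤ (t.primitiveSpan K n).map (toEnd K L M e) := by
  refine Submodule.span_le.mpr ?_
  rintro _ ⟨v, p, P, rfl⟩
  have P' : t.HasPrimitiveVectorWith v ((n + 2 * (p + 1) : ℕ) : K) := by
    convert P using 2
    ring
  have hc : ((p : K) + 1) * (((n + 2 + 2 * p : ℕ) : K) - p) ≠ 0 := by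
    refine mul_ne_zero (Nat.cast_add_one_ne_zero p) ?_
    rw [sub_ne_zero]
    exact_mod_cast (by omega : n + 2 + 2 * p ≠ p)
  refine ⟨(((p : K) + 1) * (((n + 2 + 2 * p : ℕ) : K) - p))⁻¹ • (toEnd K L M f ^ (p + 1)) v,
    Submodule.smul_mem _ _ (Submodule.subset_span ⟨v, p + 1, P', rfl⟩), ?_⟩
  rw [map_smul, toEnd_apply_apply, P.lie_e_pow_succ_toEnd_f, smul_smul, inv_mul_cancel₀ hc,
    one_smul]

include t in
lemma exists_pow_toEnd_e_eq_zero [FiniteDimensional K M] {u : M} {ν : K}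
    (hu : ⁅h, u⁆ = ν • u) : ∃ q : ℕ, (toEnd K L M e ^ q) u = 0 := by
  by_contra! hne
  have hinj : Function.Injective fun q : ℕ ↦ ν + 2 * q := fun a b hab ↦ by simpa using hab
  refine Set.infinite_range_of_injective hinj ((toEnd K L M h).finite_hasEigenvalue.subset ?_)
  rintro _ ⟨q, rfl⟩
  refine Module.End.hasEigenvalue_of_hasEigenvector ⟨?_, hne q⟩
  rw [Module.End.mem_eigenspace_iff, toEnd_apply_apply, t.lie_h_pow_toEnd_e hu]

lemma mem_primitiveSpan [FiniteDimensional K M] {n : ℕ} {u : M} (hu : ⁅h, u⁆ = (n : K) • u) :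
    u ∈ t.primitiveSpan K n := by
  obtain ⟨q, hq⟩ := t.exists_pow_toEnd_e_eq_zero hu
  induction q generalizing n u with
  | zero => simp_all
  | succ q ih =>
    have heu : ⁅h, ⁅e, u⁆⁆ = ((n + 2 : ℕ) : K) • ⁅e, u⁆ := by
      simpa [add_comm] using t.lie_h_pow_toEnd_e hu 1
    obtain ⟨y, hy, hey⟩ := t.primitiveSpan_add_two_le_map n (ih heu (by simpa [pow_succ] using hq))
    rw [← sub_add_cancel u y]
    refine add_mem ?_ hy
    by_cases huy : u - y = 0
    · rw [huy]
      exact zero_mem _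
    refine Submodule.subset_span ⟨u - y, 0, ⟨huy, ?_, ?_⟩, by simp⟩
    · have hyn := t.primitiveSpan_le_eigenspace n hy
      rw [Module.End.mem_eigenspace_iff, toEnd_apply_apply] at hyn
      rw [lie_sub, hu, hyn, smul_sub]
      simp
    · rw [lie_sub, ← hey, toEnd_apply_apply, sub_self]

include t in
lemma tmul_h_mem_overshearSpan_of_lie_h_eq_nat [FiniteDimensional K M] {u : M} (k : ℕ)
    (hu : ⁅h, u⁆ = (2 * k : K) • u) : u ⊗ₜ[K] h ∈ overshearSpan K L M := by
  rcases Nat.eq_zero_or_pos k with rfl | hk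
  · exact tmul_mem_overshearSpan_of_lie_eq_zero (by simpa using hu)
  suffices t.primitiveSpan K (2 * k) ≤
      (overshearSpan K L M).toSubmodule.comap ((TensorProduct.mk K M L).flip h) from
    this (t.mem_primitiveSpan (by exact_mod_cast hu))
  refine Submodule.span_le.mpr ?_
  rintro _ ⟨v, p, P, rfl⟩
  exact P.pow_toEnd_f_tmul_h_mem_overshearSpan (m := k + p) (by omega) (by push_cast; ring) p

include t in
lemma tmul_h_mem_overshearSpan_of_lie_h_eq_int [FiniteDimensional K M] {u : M} (k : ℤ)
    (hu : ⁅h, u⁆ = (2 * k : K) • u) : u ⊗ₜ[K] h ∈ overshearSpan K L M := by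
  obtain ⟨n, rfl | rfl⟩ := Int.eq_nat_or_neg k
  · exact t.tmul_h_mem_overshearSpan_of_lie_h_eq_nat n (by simpa using hu)
  · have := t.symm.tmul_h_mem_overshearSpan_of_lie_h_eq_nat (u := u) n
      (by rw [neg_lie, hu, ← neg_smul]; push_cast; rw [neg_mul_eq_mul_neg, neg_neg])
    rwa [tmul_neg, neg_mem_iff] at this

end Decomposition

end IsSl2Triple

theorem weightSpace_tensor_cartan_mem_overshear_span_general
    {𝔤 : Type} [LieRing 𝔤] [LieAlgebra ℂ 𝔤]
    (𝔥 : LieSubalgebra ℂ 𝔤)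
    {W : Type} [AddCommGroup W] [Module ℂ W] [LieRingModule 𝔤 W] [LieModule ℂ 𝔤 W]
    [FiniteDimensional ℂ W]
    (lam : 𝔥 →ₗ[ℂ] ℂ)
    (α : 𝔥 →ₗ[ℂ] ℂ)
    (e f : 𝔤)
    (heα : ∀ h : 𝔥, ⁅(h : 𝔤), e⁆ = α h • e)
    (hfα : ∀ h : 𝔥, ⁅(h : 𝔤), f⁆ = -α h • f)
    (Hα : 𝔥) (hef : ⁅e, f⁆ = (Hα : 𝔤)) (hα2 : α Hα = 2)
    (hk : ∃ k : ℤ, k ≠ 0 ∧ lam Hα = 2 * (k : ℂ)) :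
    ∀ w : W, (∀ h : 𝔥, ⁅(h : 𝔤), w⁆ = lam h • w) →
      ∀ h : 𝔥, w ⊗ₜ[ℂ] (h : 𝔤) ∈ LieSubmodule.lieSpan ℂ 𝔤
        {z : W ⊗[ℂ] 𝔤 | ∃ (u : W) (x : 𝔤), z = u ⊗ₜ[ℂ] x ∧ ⁅x, ⁅x, u⁆⁆ = (0 : W)} := by
  intro w hw h
  obtain ⟨k, hk0, hlam⟩ := hk
  have t : IsSl2Triple (Hα : 𝔤) e f :=
    { h_ne_zero := fun h0 ↦ by simp [show Hα = 0 from Subtype.ext h0] at hα2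
      lie_e_f := hef
      lie_h_e_nsmul := by rw [heα, hα2, ofNat_smul_eq_nsmul]
      lie_h_f_nsmul := by rw [hfα, hα2, neg_smul, ofNat_smul_eq_nsmul] }
  have hker : ⁅lam Hα • (h : 𝔤) - lam h • (Hα : 𝔤), w⁆ = 0 := by
    rw [sub_lie, smul_lie, smul_lie, hw, hw, smul_smul, smul_smul, mul_comm, sub_self]
  have hsplit : lam Hα • (w ⊗ₜ[ℂ] (h : 𝔤)) =
      w ⊗ₜ[ℂ] (lam Hα • (h : 𝔤) - lam h • (Hα : 𝔤)) + lam h • (w ⊗ₜ[ℂ] (Hα : 𝔤)) := by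
    rw [tmul_sub, tmul_smul, tmul_smul, sub_add_cancel]
  have hmem : lam Hα • (w ⊗ₜ[ℂ] (h : 𝔤)) ∈ overshearSpan ℂ 𝔤 W := hsplit ▸
    add_mem (tmul_mem_overshearSpan_of_lie_eq_zero hker)
      ((overshearSpan ℂ 𝔤 W).smul_mem _
        (t.tmul_h_mem_overshearSpan_of_lie_h_eq_int k (by rw [hw, hlam])))
  exact (Submodule.smul_mem_iff (overshearSpan ℂ 𝔤 W).toSubmodule
    (by simpa [hlam] using hk0)).mp hmem

/-- **Lemma (Tóth–Varolin).**  Let `𝔤` be a finite-dimensional complex semisimple Lie algebra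
with Cartan subalgebra `𝔥`, and `W` a finite-dimensional `𝔤`-module.  Let `λ` be a weight of
`W` relative to `𝔥`.  Suppose `α` is a root of `(𝔤,𝔥)`, with root vectors `e ∈ 𝔤_α`,
`f ∈ 𝔤_{−α}`, whose coroot `H_α ∈ 𝔥` (so `⁅e,f⁆ = H_α` and `α(H_α) = 2`) satisfies that
`λ(H_α)` is a nonzero even integer.  Then `W_λ ⊗ 𝔥` is contained in the Lie submodule of
`W ⊗ 𝔤` generated by the `𝔤`-overshears. -/
theorem weightSpace_tensor_cartan_mem_overshear_span
    {𝔤 : Type} [LieRing 𝔤] [LieAlgebra ℂ 𝔤] [FiniteDimensional ℂ 𝔤]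
    [LieAlgebra.IsSemisimple ℂ 𝔤]
    (𝔥 : LieSubalgebra ℂ 𝔤) [𝔥.IsCartanSubalgebra]
    {W : Type} [AddCommGroup W] [Module ℂ W] [LieRingModule 𝔤 W] [LieModule ℂ 𝔤 W]
    [FiniteDimensional ℂ W]
    (lam : 𝔥 →ₗ[ℂ] ℂ)
    (hweight : ∃ w : W, w ≠ 0 ∧ ∀ h : 𝔥, ⁅(h : 𝔤), w⁆ = lam h • w)
    (α : 𝔥 →ₗ[ℂ] ℂ) (hα : α ≠ 0)
    (e f : 𝔤) (he : e ≠ 0) (hf : f ≠ 0)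
    (heα : ∀ h : 𝔥, ⁅(h : 𝔤), e⁆ = α h • e)
    (hfα : ∀ h : 𝔥, ⁅(h : 𝔤), f⁆ = -α h • f)
    (Hα : 𝔥) (hef : ⁅e, f⁆ = (Hα : 𝔤)) (hα2 : α Hα = 2)
    (hk : ∃ k : ℤ, k ≠ 0 ∧ lam Hα = 2 * (k : ℂ)) :
    ∀ w : W, (∀ h : 𝔥, ⁅(h : 𝔤), w⁆ = lam h • w) →
      ∀ h : 𝔥, w ⊗ₜ[ℂ] (h : 𝔤) ∈ LieSubmodule.lieSpan ℂ 𝔤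
        {z : W ⊗[ℂ] 𝔤 | ∃ (u : W) (x : 𝔤), z = u ⊗ₜ[ℂ] x ∧ ⁅x, ⁅x, u⁆⁆ = (0 : W)} :=
  weightSpace_tensor_cartan_mem_overshear_span_general 𝔥 lam α e f heα hfα Hα hef hα2 hk
end

section
/- Let V be a finite-dimensional irreducible module over sl(2,ℂ), and suppose v ∈ V satisfies Hv = λv for some λ ≠ 0, and that neither Ev = 0 nor Fv = 0. Then V ⊗ sl(2,ℂ) is generated, as a Lie submodule, by the element v ⊗ H together with the sl(2,ℂ)-overshears of V ⊗ sl(2,ℂ); that is, the smallest Lie submodule of V ⊗ sl(2,ℂ) containing v ⊗ H and all overshears equals V ⊗ sl(2,ℂ). -/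
/-!
Let `u` be a primitive vector of weight `μ` and `ψ j = F^j u`. The `ψ j` span `V` and have
distinct `H`-weights, so the weight vector `v` is a multiple of some `ψ k`; `Ev ≠ 0` forces
`k ≥ 1` and `Fv ≠ 0` forces `μ ≠ k`.

Let `N` be the Lie submodule in question. The overshears `u ⊗ E` and `Fu ⊗ E` give
`u ⊗ H = Fu ⊗ E - F·(u ⊗ E) ∈ N`. As `[F, [F, H]] = 0`, `F^k·(u ⊗ H) = ψ k ⊗ H + 2k ψ (k-1) ⊗ F`,
and `ψ k ⊗ H ∈ N` (from `v ⊗ H`) yields `ψ (k-1) ⊗ F`, hence `ψ k ⊗ F` and `ψ (k+1) ⊗ H` in `N`.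
Applying `E` twice to `ψ (k+1) ⊗ H` gives `ψ k ⊗ E` up to the factor `(k+1)(μ-k) ≠ 0`. So
`ψ k ⊗ L ⊆ N`, and the `w` with `w ⊗ L ⊆ N` form a nonzero Lie submodule of the irreducible `V`.
-/

open TensorProduct LieModule

namespace Module.End

variable {K V ι : Type*} [Field K] [AddCommGroup V] [Module K V]
  {T : End K V} {Q : ι → V} {ν : ι → K} {w : V} {a : K}

lemma mem_span_image_of_mem_eigenspace_of_mem_span_range
    (hQ : ∀ i, Q i ∈ T.eigenspace (ν i)) (hw : w ∈ T.eigenspace a)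
    (hspan : w ∈ Submodule.span K (Set.range Q)) :
    w ∈ Submodule.span K (Q '' {i | ν i = a}) := by
  set R := ⨆ (b : K) (_ : b ≠ a), T.eigenspace b
  have hle : Submodule.span K (Set.range Q) ≤ Submodule.span K (Q '' {i | ν i = a}) ⊔ R := by
    rw [Submodule.span_le]
    rintro _ ⟨i, rfl⟩
    by_cases hi : ν i = a
    · exact Submodule.mem_sup_left (Submodule.subset_span ⟨i, hi, rfl⟩)
    · exact Submodule.mem_sup_right
        (Submodule.mem_iSup_of_mem (ν i) (Submodule.mem_iSup_of_mem hi (hQ i)))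
  have himage : Submodule.span K (Q '' {i | ν i = a}) ≤ T.eigenspace a := by
    rw [Submodule.span_le]
    rintro _ ⟨i, hi, rfl⟩
    exact hi ▸ hQ i
  obtain ⟨y, hy, r, hr, rfl⟩ := Submodule.mem_sup.mp (hle hspan)
  have hr' : r ∈ T.eigenspace a := by
    simpa using Submodule.sub_mem _ hw (himage hy)
  have hr0 : r = 0 := by
    simpa using (T.eigenspaces_iSupIndep a).le_bot ⟨hr', hr⟩
  rwa [hr0, add_zero]

lemma exists_eq_smul_of_mem_eigenspace_of_mem_span_range (hν : Function.Injective ν)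
    (hQ : ∀ i, Q i ∈ T.eigenspace (ν i)) (hw : w ∈ T.eigenspace a) (hw0 : w ≠ 0)
    (hspan : w ∈ Submodule.span K (Set.range Q)) :
    ∃ i, ∃ c : K, w = c • Q i := by
  have hmem := mem_span_image_of_mem_eigenspace_of_mem_span_range hQ hw hspan
  have hsub : {i | ν i = a}.Subsingleton := fun i hi j hj ↦ hν (hi.trans hj.symm)
  rcases hsub.eq_empty_or_singleton with h | ⟨i, h⟩
  · simp [h] at hmem
    exact absurd hmem hw0
  · rw [h, Set.image_singleton, Submodule.mem_span_singleton] at hmem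
    obtain ⟨c, rfl⟩ := hmem
    exact ⟨i, c, rfl⟩

end Module.End

namespace LieModule

variable {R L M N : Type*} [CommRing R] [LieRing L] [LieAlgebra R L]
  [AddCommGroup M] [Module R M] [LieRingModule L M] [LieModule R L M]
  [AddCommGroup N] [Module R N] [LieRingModule L N] [LieModule R L N]

lemma toEnd_pow_succ_tmul_of_lie_lie_eq_zero {x : L} {n : N} (hx : ⁅x, ⁅x, n⁆⁆ = 0)
    (m : M) (j : ℕ) :
    (toEnd R L (M ⊗[R] N) x ^ (j + 1)) (m ⊗ₜ n) =
      (toEnd R L M x ^ (j + 1)) m ⊗ₜ n + (j + 1) • ((toEnd R L M x ^ j) m ⊗ₜ ⁅x, n⁆) := by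
  induction j with
  | zero => simp [lie_tmul_right]
  | succ j ih =>
    rw [pow_succ', Module.End.mul_apply, ih, pow_succ' _ (j + 1)]
    simp only [Module.End.mul_apply, toEnd_apply_apply, lie_add, lie_nsmul, lie_tmul_right, hx,
      tmul_zero, add_zero]
    rw [pow_succ']
    simp only [Module.End.mul_apply, toEnd_apply_apply]
    module

end LieModule

namespace LieSubmodule

variable {R L M N : Type*} [CommRing R] [LieRing L] [LieAlgebra R L]
  [AddCommGroup M] [Module R M] [LieRingModule L M] [LieModule R L M]
  [AddCommGroup N] [Module R N] [LieRingModule L N] [LieModule R L N]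

def tmulColon (P : LieSubmodule R L (M ⊗[R] N)) : LieSubmodule R L M where
  carrier := {m | ∀ n, m ⊗ₜ n ∈ P}
  add_mem' hm hm' n := by simpa only [add_tmul] using add_mem (hm n) (hm' n)
  zero_mem' n := by simp
  smul_mem' c m hm n := by simpa only [smul_tmul'] using SMulMemClass.smul_mem c (hm n)
  lie_mem {x m} hm n := by
    have h := P.sub_mem (P.lie_mem (x := x) (hm n)) (hm ⁅x, n⁆)
    rwa [lie_tmul_right, add_sub_cancel_right] at h

@[simp]
lemma mem_tmulColon {P : LieSubmodule R L (M ⊗[R] N)} {m : M} :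
    m ∈ P.tmulColon ↔ ∀ n, m ⊗ₜ n ∈ P :=
  Iff.rfl

lemma eq_top_of_forall_tmul_mem [IsIrreducible R L M] {P : LieSubmodule R L (M ⊗[R] N)}
    {m : M} (hm : m ≠ 0) (h : ∀ n, m ⊗ₜ n ∈ P) : P = ⊤ := by
  have hmem : m ∈ P.tmulColon := mem_tmulColon.mpr h
  have hcolon : P.tmulColon = ⊤ :=
    (eq_bot_or_eq_top _).resolve_left fun hbot ↦ hm ((mem_bot m).mp (hbot ▸ hmem))
  rw [← toSubmodule_eq_top, eq_top_iff, ← span_tmul_eq_top R M N, Submodule.span_le]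
  rintro _ ⟨m', n, rfl⟩
  exact mem_tmulColon.mp (hcolon ▸ mem_top m') n

end LieSubmodule

lemma Submodule.forall_tmul_mem_of_span_eq_top {R M N : Type*} [CommRing R]
    [AddCommGroup M] [Module R M] [AddCommGroup N] [Module R N] {s : Set N}
    (hs : Submodule.span R s = ⊤) {P : Submodule R (M ⊗[R] N)} {m : M}
    (h : ∀ n ∈ s, m ⊗ₜ n ∈ P) (n : N) : m ⊗ₜ n ∈ P := by
  have : s ⊆ P.comap (TensorProduct.mk R M N m) := h
  exact (Submodule.span_le.mpr this) (hs ▸ Submodule.mem_top : n ∈ Submodule.span R s)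

lemma Module.Basis.span_eq_top_of_eq_vecCons_three {R M : Type*} [CommRing R] [AddCommGroup M]
    [Module R M] (b : Module.Basis (Fin 3) R M) {x y z : M} (hb : ⇑b = ![x, y, z]) :
    Submodule.span R {x, y, z} = ⊤ := by
  rw [← b.span_eq, hb]
  congr 1
  ext
  simp [Matrix.range_cons, or_comm, or_left_comm]

namespace IsSl2Triple

variable (R : Type*) {L : Type*} [CommRing R] [LieRing L] [LieAlgebra R L] {h e f : L}

lemma lie_f_h_smul (t : IsSl2Triple h e f) : ⁅f, h⁆ = (2 : R) • f := by
  rw [← lie_skew, t.lie_lie_smul_f R, neg_neg]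

lemma lie_e_h_smul (t : IsSl2Triple h e f) : ⁅e, h⁆ = -((2 : R) • e) := by
  rw [← lie_skew, t.lie_h_e_smul R]

end IsSl2Triple

section Overshears

variable (R L M : Type*) [CommRing R] [LieRing L] [LieAlgebra R L]
  [AddCommGroup M] [Module R M] [LieRingModule L M]

def overshears : Set (M ⊗[R] L) :=
  {z | ∃ (w : M) (x : L), z = w ⊗ₜ[R] x ∧ ⁅x, ⁅x, w⁆⁆ = (0 : M)}

variable {R L M}

lemma tmul_mem_overshears {w : M} {x : L} (h : ⁅x, ⁅x, w⁆⁆ = 0) :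
    w ⊗ₜ[R] x ∈ overshears R L M :=
  ⟨w, x, rfl, h⟩

end Overshears

namespace IsSl2Triple.HasPrimitiveVectorWith

section CommRing

variable {R L M : Type*} [CommRing R] [LieRing L] [LieAlgebra R L]
  [AddCommGroup M] [Module R M] [LieRingModule L M] [LieModule R L M]
  {h e f : L} {t : IsSl2Triple h e f} {m : M} {μ : R}

local notation "ψ " n => ((toEnd R L M f) ^ n) m

lemma span_range_pow_toEnd_f_eq_top [IsIrreducible R L M] (P : t.HasPrimitiveVectorWith m μ)
    (hL : Submodule.span R {e, f, h} = ⊤) :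
    Submodule.span R (Set.range fun n : ℕ ↦ ψ n) = ⊤ := by
  set S := Submodule.span R (Set.range fun n : ℕ ↦ ψ n)
  have hψ (n : ℕ) : (ψ n) ∈ S := Submodule.subset_span ⟨n, rfl⟩
  have hgen : ∀ y ∈ ({e, f, h} : Set L), ∀ n : ℕ, ⁅y, ψ n⁆ ∈ S := by
    rintro y (rfl | rfl | rfl) n
    · cases n with
      | zero => simpa using (P.lie_e ▸ S.zero_mem)
      | succ n => exact P.lie_e_pow_succ_toEnd_f n ▸ S.smul_mem _ (hψ n)
    · exact P.lie_f_pow_toEnd_f n ▸ hψ (n + 1)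
    · exact P.lie_h_pow_toEnd_f n ▸ S.smul_mem _ (hψ n)
  have hstable (x : L) {w : M} (hw : w ∈ S) : ⁅x, w⁆ ∈ S := by
    have hx : x ∈ Submodule.span R {e, f, h} := hL ▸ Submodule.mem_top
    induction hx using Submodule.span_induction with
    | mem y hy =>
      induction hw using Submodule.span_induction with
      | mem _ hw => obtain ⟨n, rfl⟩ := hw; exact hgen y hy n
      | zero => simp
      | add w w' _ _ hw hw' => rw [lie_add]; exact S.add_mem hw hw'
      | smul c w _ hw => rw [lie_smul]; exact S.smul_mem c hw
    | zero => simp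
    | add x x' _ _ hx hx' => rw [add_lie]; exact S.add_mem hx hx'
    | smul c x _ hx => rw [smul_lie]; exact S.smul_mem c hx
  let S' : LieSubmodule R L M := { S with lie_mem := hstable _ }
  have hm : m ∈ S' := (by simpa using hψ 0 : m ∈ S)
  have hS' : S' = ⊤ := (eq_bot_or_eq_top S').resolve_left fun hbot ↦
    P.ne_zero ((LieSubmodule.mem_bot m).mp (hbot ▸ hm))
  exact congrArg LieSubmodule.toSubmodule hS'

end CommRing

section Field

variable {K L V : Type*} [Field K] [CharZero K] [LieRing L] [LieAlgebra K L]
  [AddCommGroup V] [Module K V] [LieRingModule L V] [LieModule K L V]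
  {h e f : L} {t : IsSl2Triple h e f} {u : V} {μ : K}
  {N : LieSubmodule K L (V ⊗[K] L)}

local notation "ψ " n => ((toEnd K L V f) ^ n) u

lemma tmul_h_mem (P : t.HasPrimitiveVectorWith u μ) (hN : overshears K L V ⊆ N) :
    u ⊗ₜ h ∈ N := by
  have hue : u ⊗ₜ e ∈ N := hN (tmul_mem_overshears (by simp [P.lie_e]))
  have hfue : ⁅f, u⁆ ⊗ₜ e ∈ N := hN (tmul_mem_overshears (by
    simpa [P.lie_e] using congrArg (⁅e, ·⁆) (P.lie_e_pow_succ_toEnd_f 0)))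
  have hlie : ⁅f, u ⊗ₜ[K] e⁆ = ⁅f, u⁆ ⊗ₜ e - u ⊗ₜ h := by
    rw [lie_tmul_right, ← lie_skew, t.lie_e_f, tmul_neg, sub_eq_add_neg]
  have := sub_mem hfue (hlie ▸ N.lie_mem hue)
  rwa [sub_sub_cancel] at this

lemma pow_toEnd_f_tmul_f_mem (P : t.HasPrimitiveVectorWith u μ) (hN : overshears K L V ⊆ N)
    {k : ℕ} (hk : (ψ (k + 1)) ⊗ₜ h ∈ N) : (ψ k) ⊗ₜ f ∈ N := by
  have hffh : ⁅f, ⁅f, h⁆⁆ = 0 := by rw [t.lie_f_h_smul K, lie_smul, lie_self, smul_zero]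
  have hpow := ((toEnd K L N f ^ (k + 1)) ⟨_, tmul_h_mem P hN⟩).2
  rw [LieSubmodule.coe_toEnd_pow, toEnd_pow_succ_tmul_of_lie_lie_eq_zero hffh] at hpow
  have hsmul : ((k + 1 : K) * 2) • ((ψ k) ⊗ₜ f) ∈ N := by
    simpa [t.lie_f_h_smul K, ← Nat.cast_smul_eq_nsmul K, mul_smul] using sub_mem hpow hk
  have hc : (k + 1 : K) * 2 ≠ 0 := mul_ne_zero (Nat.cast_add_one_ne_zero k) two_ne_zero
  exact (N.toSubmodule.smul_mem_iff hc).mp hsmul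

lemma pow_toEnd_f_tmul_e_mem (P : t.HasPrimitiveVectorWith u μ) {k : ℕ} (hμ : μ ≠ k)
    (hk : (ψ k) ⊗ₜ h ∈ N) (hk' : (ψ (k + 1)) ⊗ₜ h ∈ N) : (ψ k) ⊗ₜ e ∈ N := by
  have hc : ((k + 1 : K) * (μ - k)) ≠ 0 :=
    mul_ne_zero (Nat.cast_add_one_ne_zero k) (sub_ne_zero.mpr hμ)
  have hlie_h : ⁅e, (ψ (k + 1)) ⊗ₜ[K] h⁆ =
      ((k + 1 : K) * (μ - k)) • ((ψ k) ⊗ₜ h) - (2 : K) • ((ψ (k + 1)) ⊗ₜ e) := by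
    rw [lie_tmul_right, P.lie_e_pow_succ_toEnd_f, t.lie_e_h_smul K, smul_tmul', tmul_neg, tmul_smul,
      ← sub_eq_add_neg]
  have hk'e : (ψ (k + 1)) ⊗ₜ e ∈ N := by
    have := sub_mem (N.smul_mem ((k + 1 : K) * (μ - k)) hk) (hlie_h ▸ N.lie_mem hk')
    rw [sub_sub_cancel] at this
    exact (N.toSubmodule.smul_mem_iff two_ne_zero).mp this
  have hlie_e : ⁅e, (ψ (k + 1)) ⊗ₜ[K] e⁆ = ((k + 1 : K) * (μ - k)) • ((ψ k) ⊗ₜ e) := by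
    rw [lie_tmul_right, P.lie_e_pow_succ_toEnd_f, lie_self, tmul_zero, add_zero, smul_tmul']
  exact (N.toSubmodule.smul_mem_iff hc).mp (hlie_e ▸ N.lie_mem hk'e)

lemma pow_toEnd_f_tmul_mem (P : t.HasPrimitiveVectorWith u μ)
    (hL : Submodule.span K {e, f, h} = ⊤) (hN : overshears K L V ⊆ N) {k : ℕ} (hμ : μ ≠ (k + 1 : ℕ))
    (hk : (ψ (k + 1)) ⊗ₜ h ∈ N) (x : L) : (ψ (k + 1)) ⊗ₜ x ∈ N := by
  have hf : (ψ (k + 1)) ⊗ₜ f ∈ N := by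
    have := N.lie_mem (x := f) (P.pow_toEnd_f_tmul_f_mem hN hk)
    rwa [lie_tmul_right, lie_self, tmul_zero, add_zero, P.lie_f_pow_toEnd_f] at this
  have hh : (ψ (k + 2)) ⊗ₜ h ∈ N := by
    have := sub_mem (N.lie_mem (x := f) hk) (N.smul_mem (2 : K) hf)
    rwa [lie_tmul_right, t.lie_f_h_smul K, tmul_smul, add_sub_cancel_right,
      P.lie_f_pow_toEnd_f] at this
  have he := P.pow_toEnd_f_tmul_e_mem hμ hk hh
  refine Submodule.forall_tmul_mem_of_span_eq_top (P := N.toSubmodule) hL ?_ x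
  rintro _ (rfl | rfl | rfl)
  exacts [he, hf, hk]

end Field

end IsSl2Triple.HasPrimitiveVectorWith

theorem sl2_generated_by_vH_and_overshears_general
    {L : Type} [LieRing L] [LieAlgebra ℂ L]
    (E F H : L) (b : Module.Basis (Fin 3) ℂ L) (hb : ⇑b = ![E, F, H])
    (hHE : ⁅H, E⁆ = (2 : ℂ) • E) (hHF : ⁅H, F⁆ = (-2 : ℂ) • F) (hEF : ⁅E, F⁆ = H)
    {V : Type} [AddCommGroup V] [Module ℂ V] [LieRingModule L V] [LieModule ℂ L V]
    [FiniteDimensional ℂ V] [LieModule.IsIrreducible ℂ L V]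
    (v : V) (lam : ℂ) (hv : ⁅H, v⁆ = lam • v)
    (hEv : ⁅E, v⁆ ≠ 0) (hFv : ⁅F, v⁆ ≠ 0) :
    LieSubmodule.lieSpan ℂ L
      (insert (v ⊗ₜ[ℂ] H)
        {z : V ⊗[ℂ] L | ∃ (w : V) (x : L), z = w ⊗ₜ[ℂ] x ∧ ⁅x, ⁅x, w⁆⁆ = (0 : V)}) = ⊤ := by
  have t : IsSl2Triple H E F :=
    { h_ne_zero := by simpa [hb] using b.ne_zero 2
      lie_e_f := hEF
      lie_h_e_nsmul := by rw [hHE, two_smul, two_nsmul]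
      lie_h_f_nsmul := by rw [hHF, neg_smul, two_smul, two_nsmul] }
  have hL := b.span_eq_top_of_eq_vecCons_three hb
  set N := LieSubmodule.lieSpan ℂ L (insert (v ⊗ₜ[ℂ] H) (overshears ℂ L V))
  have hN : overshears ℂ L V ⊆ N := fun _ hz ↦
    LieSubmodule.subset_lieSpan (Set.mem_insert_of_mem _ hz)
  have hvH : v ⊗ₜ H ∈ N := LieSubmodule.subset_lieSpan (Set.mem_insert _ _)
  have hv0 : v ≠ 0 := by rintro rfl; simp at hEv
  have := nontrivial_of_ne v 0 hv0
  obtain ⟨μ, u, -, P⟩ := t.exists_hasPrimitiveVectorWith (R := ℂ) (M := V)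
  obtain ⟨k, γ, rfl⟩ := Module.End.exists_eq_smul_of_mem_eigenspace_of_mem_span_range
    (T := toEnd ℂ L V H) (ν := fun n : ℕ ↦ μ - 2 * n) (fun m n hmn ↦ by simpa using hmn)
    (fun n ↦ Module.End.mem_eigenspace_iff.mpr (P.lie_h_pow_toEnd_f n))
    (Module.End.mem_eigenspace_iff.mpr hv) hv0
    (P.span_range_pow_toEnd_f_eq_top hL ▸ Submodule.mem_top)
  obtain ⟨k, rfl⟩ : ∃ m, k = m + 1 := by
    refine Nat.exists_eq_succ_of_ne_zero fun hk ↦ hEv ?_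
    simp [hk, P.lie_e]
  have hμ : μ ≠ (k + 1 : ℕ) := fun hμ ↦ hFv (by
    rw [lie_smul, P.lie_f_pow_toEnd_f, P.pow_toEnd_f_eq_zero_of_eq_nat hμ, smul_zero])
  have hγ : γ ≠ 0 := by rintro rfl; simp at hv0
  rw [← smul_tmul'] at hvH
  exact LieSubmodule.eq_top_of_forall_tmul_mem (right_ne_zero_of_smul hv0)
    (P.pow_toEnd_f_tmul_mem hL hN hμ ((N.toSubmodule.smul_mem_iff hγ).mp hvH))

/-- **Proposition (Tóth–Varolin).**  Let `V` be a finite-dimensional irreducible module over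
`sl(2,ℂ)` (presented as a complex Lie algebra `L` with basis `E, F, H` satisfying
`[H,E] = 2E`, `[H,F] = -2F`, `[E,F] = H`), and let `v ∈ V` satisfy `Hv = λv` with `λ ≠ 0`,
`Ev ≠ 0` and `Fv ≠ 0`.  Then the smallest Lie submodule of `V ⊗ L` containing `v ⊗ H` and all
overshears (the elements `w ⊗ x` with `x·(x·w) = 0`) is all of `V ⊗ L`. -/
theorem sl2_generated_by_vH_and_overshears
    {L : Type} [LieRing L] [LieAlgebra ℂ L]
    (E F H : L) (b : Module.Basis (Fin 3) ℂ L) (hb : ⇑b = ![E, F, H])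
    (hHE : ⁅H, E⁆ = (2 : ℂ) • E) (hHF : ⁅H, F⁆ = (-2 : ℂ) • F) (hEF : ⁅E, F⁆ = H)
    {V : Type} [AddCommGroup V] [Module ℂ V] [LieRingModule L V] [LieModule ℂ L V]
    [FiniteDimensional ℂ V] [LieModule.IsIrreducible ℂ L V]
    (v : V) (lam : ℂ) (hlam : lam ≠ 0) (hv : ⁅H, v⁆ = lam • v)
    (hEv : ⁅E, v⁆ ≠ 0) (hFv : ⁅F, v⁆ ≠ 0) :
    LieSubmodule.lieSpan ℂ L
      (insert (v ⊗ₜ[ℂ] H)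
        {z : V ⊗[ℂ] L | ∃ (w : V) (x : L), z = w ⊗ₜ[ℂ] x ∧ ⁅x, ⁅x, w⁆⁆ = (0 : V)}) = ⊤ :=
  sl2_generated_by_vH_and_overshears_general E F H b hb hHE hHF hEF v lam hv hEv hFv
end
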